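/- Let 𝔤 be a finite-dimensional real Lie algebra and K : 𝔤 × 𝔤 → ℝ a Chevalley–Eilenberg 2-cocycle. For smooth functions f, g : 𝔤* → ℝ define {f,g}(α) := α([df_α, dg_α]) + K(df_α, dg_α), where df_α ∈ 𝔤 denotes the Fréchet derivative Df(α) ∈ (𝔤*)* transported to 𝔤 via the canonical evaluation isomorphism 𝔤 ≅ (𝔤*)*. Then {·,·} is a Poisson bracket on C^∞(𝔤*,ℝ): it is ℝ-bilinear, antisymmetric, satisfies the Leibniz rule {f, g·h} = {f,g}·h + g·{f,h}, and satisfies the Jacobi identity {f,{g,h}} + {g,{h,f}} + {h,{f,g}} = 0. -/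

import Mathlib

open Classical in
/-- The gradient of `f : 𝔤* → ℝ` at `α`: the Fréchet derivative `Df(α) ∈ (𝔤*)*`
transported to `𝔤` via the canonical evaluation identification, i.e. the (unique,
in finite dimensions) vector `v ∈ 𝔤` with `Df(α)(β) = β(v)` for all `β ∈ 𝔤*`. -/
noncomputable def kksGrad {L : Type*} [NormedAddCommGroup L] [NormedSpace ℝ L]
    (f : (L →L[ℝ] ℝ) → ℝ) (α : L →L[ℝ] ℝ) : L :=
  if h : ∃ v : L, ∀ β : L →L[ℝ] ℝ, fderiv ℝ f α β = β v then h.choose else 0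

/-- The Kirillov–Kostant–Souriau bracket (with cocycle `K`) of two functions on
`𝔤*`: `{f,g}(α) = α([df_α, dg_α]) + K(df_α, dg_α)`, for the Lie bracket `B`. -/
noncomputable def kksBracket {L : Type*} [NormedAddCommGroup L] [NormedSpace ℝ L]
    (B : L →ₗ[ℝ] L →ₗ[ℝ] L) (K : L →ₗ[ℝ] L →ₗ[ℝ] ℝ)
    (f g : (L →L[ℝ] ℝ) → ℝ) : (L →L[ℝ] ℝ) → ℝ :=
  fun α => α (B (kksGrad f α) (kksGrad g α)) + K (kksGrad f α) (kksGrad g α)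

/-!
Write `Π_α := α ∘ [·,·] + K`, an alternating bilinear form on `𝔤` for each `α ∈ 𝔤*`, so that
`{f,g}(α) = Π_α(df_α, dg_α)`. Bilinearity, antisymmetry and the Leibniz rule are then inherited
from the derivative. For the Jacobi identity, note that `{f,g}(α) = Dg(α)(X_f(α))` for the
Hamiltonian covector `X_f(α) := Π_α(df_α, ·) ∈ 𝔤*`. Differentiating `{g,h}` along `X_f(α)` gives
`Π_α(df, [dg,dh]) - D²g(α)(X_f, X_h) + D²h(α)(X_f, X_g)`. In the cyclic sum the second-derivative
terms cancel by the symmetry of `D²`, and the remaining terms vanish because `Π_α` is a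
2-cocycle: `α ∘ [·,·]` by the Jacobi identity and `K` by hypothesis.
-/

open Module

namespace NormedSpace

variable (𝕜 E : Type*) [RCLike 𝕜] [NormedAddCommGroup E] [NormedSpace 𝕜 E]
  [FiniteDimensional 𝕜 E]

theorem finrank_strongDual : finrank 𝕜 (StrongDual 𝕜 E) = finrank 𝕜 E :=
  LinearMap.toContinuousLinearMap.finrank_eq.symm.trans Subspace.dual_finrank_eq

noncomputable def inclusionInDoubleDualEquiv : E ≃L[𝕜] StrongDual 𝕜 (StrongDual 𝕜 E) :=
  ((inclusionInDoubleDualLi 𝕜).toLinearIsometryEquiv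
    (by rw [finrank_strongDual, finrank_strongDual])).toContinuousLinearEquiv

variable {𝕜 E}

@[simp]
theorem inclusionInDoubleDualEquiv_apply (x : E) (f : StrongDual 𝕜 E) :
    inclusionInDoubleDualEquiv 𝕜 E x f = f x :=
  rfl

@[simp]
theorem apply_inclusionInDoubleDualEquiv_symm (f : StrongDual 𝕜 E)
    (φ : StrongDual 𝕜 (StrongDual 𝕜 E)) :
    f ((inclusionInDoubleDualEquiv 𝕜 E).symm φ) = φ f := by
  rw [← inclusionInDoubleDualEquiv_apply, ContinuousLinearEquiv.apply_symm_apply]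

end NormedSpace

open NormedSpace

section

variable {L : Type*} [NormedAddCommGroup L] [NormedSpace ℝ L]

section Gradient

variable [FiniteDimensional ℝ L] {f g : (L →L[ℝ] ℝ) → ℝ} {α : L →L[ℝ] ℝ}

theorem kksGrad_eq_symm_fderiv (f : (L →L[ℝ] ℝ) → ℝ) (α : L →L[ℝ] ℝ) :
    kksGrad f α = (inclusionInDoubleDualEquiv ℝ L).symm (fderiv ℝ f α) := by
  have hex : ∃ v : L, ∀ β : L →L[ℝ] ℝ, fderiv ℝ f α β = β v :=
    ⟨_, fun β => (apply_inclusionInDoubleDualEquiv_symm β _).symm⟩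
  rw [kksGrad, dif_pos hex, ContinuousLinearEquiv.eq_symm_apply]
  ext β
  exact (hex.choose_spec β).symm

theorem kksGrad_eq_comp_fderiv (f : (L →L[ℝ] ℝ) → ℝ) :
    kksGrad f = (inclusionInDoubleDualEquiv ℝ L).symm ∘ fderiv ℝ f :=
  funext (kksGrad_eq_symm_fderiv f)

theorem fderiv_apply_eq_apply_kksGrad (f : (L →L[ℝ] ℝ) → ℝ) (α β : L →L[ℝ] ℝ) :
    fderiv ℝ f α β = β (kksGrad f α) := by
  rw [kksGrad_eq_symm_fderiv, apply_inclusionInDoubleDualEquiv_symm]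

theorem kksGrad_add (hf : DifferentiableAt ℝ f α) (hg : DifferentiableAt ℝ g α) :
    kksGrad (f + g) α = kksGrad f α + kksGrad g α := by
  simp only [kksGrad_eq_symm_fderiv, fderiv_add hf hg, map_add]

theorem kksGrad_const_smul (c : ℝ) : kksGrad (c • f) α = c • kksGrad f α := by
  simp only [kksGrad_eq_symm_fderiv, fderiv_const_smul_field, Pi.smul_apply, map_smul]

theorem kksGrad_mul (hf : DifferentiableAt ℝ f α) (hg : DifferentiableAt ℝ g α) :
    kksGrad (f * g) α = f α • kksGrad g α + g α • kksGrad f α := by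
  simp only [kksGrad_eq_symm_fderiv, fderiv_mul hf hg, map_add, map_smul]

theorem kksGrad_contDiff {m n : WithTop ℕ∞} (hf : ContDiff ℝ n f) (hmn : m + 1 ≤ n) :
    ContDiff ℝ m (kksGrad f) := by
  rw [kksGrad_eq_comp_fderiv]
  exact (inclusionInDoubleDualEquiv ℝ L).symm.contDiff.comp (hf.fderiv_right hmn)

theorem apply_fderiv_kksGrad (f : (L →L[ℝ] ℝ) → ℝ) (α β γ : L →L[ℝ] ℝ) :
    γ (fderiv ℝ (kksGrad f) α β) = fderiv ℝ (fderiv ℝ f) α β γ := by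
  rw [kksGrad_eq_comp_fderiv, ContinuousLinearEquiv.comp_fderiv (𝕜 := ℝ)
    (iso := (inclusionInDoubleDualEquiv ℝ L).symm) (f := fderiv ℝ f)]
  exact apply_inclusionInDoubleDualEquiv_symm γ _

end Gradient

section Form

variable (B : L →ₗ[ℝ] L →ₗ[ℝ] L) (K : L →ₗ[ℝ] L →ₗ[ℝ] ℝ) (α : L →L[ℝ] ℝ)

def kksForm : L →ₗ[ℝ] L →ₗ[ℝ] ℝ :=
  B.compr₂ (α : L →ₗ[ℝ] ℝ) + K

@[simp]
theorem kksForm_apply (x y : L) : kksForm B K α x y = α (B x y) + K x y :=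
  rfl

variable {B K}

theorem kksForm_isAlt (hB : B.IsAlt) (hK : K.IsAlt) : (kksForm B K α).IsAlt := fun x => by
  simp [hB.self_eq_zero, hK.self_eq_zero]

theorem kksForm_cocycle (hBjacobi : ∀ x y z : L, B (B x y) z + B (B y z) x + B (B z x) y = 0)
    (hKcocycle : ∀ x y z : L, K (B x y) z + K (B y z) x + K (B z x) y = 0) (x y z : L) :
    kksForm B K α (B x y) z + kksForm B K α (B y z) x + kksForm B K α (B z x) y = 0 := by
  have hα := congrArg α (hBjacobi x y z)
  simp only [map_add, map_zero] at hα
  simp only [kksForm_apply]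
  linarith [hKcocycle x y z]

theorem kksForm_apply_cyclic (hB : B.IsAlt)
    (hBjacobi : ∀ x y z : L, B (B x y) z + B (B y z) x + B (B z x) y = 0) (hK : K.IsAlt)
    (hKcocycle : ∀ x y z : L, K (B x y) z + K (B y z) x + K (B z x) y = 0) (x y z : L) :
    kksForm B K α x (B y z) + kksForm B K α y (B z x) + kksForm B K α z (B x y) = 0 := by
  have hform := kksForm_isAlt α hB hK
  linarith [hform.neg (B y z) x, hform.neg (B z x) y, hform.neg (B x y) z,
    kksForm_cocycle α hBjacobi hKcocycle y z x]

end Form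

section Bracket

variable {B : L →ₗ[ℝ] L →ₗ[ℝ] L} {K : L →ₗ[ℝ] L →ₗ[ℝ] ℝ} {f f' g g' h : (L →L[ℝ] ℝ) → ℝ}

theorem kksBracket_apply (B : L →ₗ[ℝ] L →ₗ[ℝ] L) (K : L →ₗ[ℝ] L →ₗ[ℝ] ℝ)
    (f g : (L →L[ℝ] ℝ) → ℝ) (α : L →L[ℝ] ℝ) :
    kksBracket B K f g α = kksForm B K α (kksGrad f α) (kksGrad g α) :=
  rfl

theorem kksBracket_antisymm (hB : B.IsAlt) (hK : K.IsAlt) :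
    kksBracket B K f g = -kksBracket B K g f := by
  funext α
  exact ((kksForm_isAlt α hB hK).neg _ _).symm

variable [FiniteDimensional ℝ L]

theorem kksBracket_add_left (hf : Differentiable ℝ f) (hf' : Differentiable ℝ f') :
    kksBracket B K (f + f') g = kksBracket B K f g + kksBracket B K f' g := by
  funext α
  simp only [kksBracket_apply, kksGrad_add (hf α) (hf' α), map_add, LinearMap.add_apply,
    Pi.add_apply]

theorem kksBracket_smul_left (c : ℝ) :
    kksBracket B K (c • f) g = c • kksBracket B K f g := by
  funext α
  simp only [kksBracket_apply, kksGrad_const_smul, map_smul, LinearMap.smul_apply, Pi.smul_apply]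

theorem kksBracket_add_right (hg : Differentiable ℝ g) (hg' : Differentiable ℝ g') :
    kksBracket B K f (g + g') = kksBracket B K f g + kksBracket B K f g' := by
  funext α
  simp only [kksBracket_apply, kksGrad_add (hg α) (hg' α), map_add, Pi.add_apply]

theorem kksBracket_smul_right (c : ℝ) :
    kksBracket B K f (c • g) = c • kksBracket B K f g := by
  funext α
  simp only [kksBracket_apply, kksGrad_const_smul, map_smul, Pi.smul_apply]

theorem kksBracket_mul_right (hg : Differentiable ℝ g) (hh : Differentiable ℝ h) :
    kksBracket B K f (g * h) = kksBracket B K f g * h + g * kksBracket B K f h := by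
  funext α
  simp only [kksBracket_apply, kksGrad_mul (hg α) (hh α), map_add, map_smul, smul_eq_mul,
    Pi.add_apply, Pi.mul_apply]
  ring

theorem kksBracket_contDiff {m n : WithTop ℕ∞} (hf : ContDiff ℝ n f) (hg : ContDiff ℝ n g)
    (hmn : m + 1 ≤ n) : ContDiff ℝ m (kksBracket B K f g) := by
  have hF := kksGrad_contDiff hf hmn
  have hG := kksGrad_contDiff hg hmn
  change ContDiff ℝ m fun α : L →L[ℝ] ℝ => α (B.toContinuousBilinearMap (kksGrad f α)
    (kksGrad g α)) + K.toContinuousBilinearMap (kksGrad f α) (kksGrad g α)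
  exact (contDiff_id.clm_apply ((B.toContinuousBilinearMap.contDiff.comp hF).clm_apply hG)).add
    ((K.toContinuousBilinearMap.contDiff.comp hF).clm_apply hG)

theorem fderiv_kksBracket_apply {α : L →L[ℝ] ℝ} (hg : DifferentiableAt ℝ (kksGrad g) α)
    (hh : DifferentiableAt ℝ (kksGrad h) α) (β : L →L[ℝ] ℝ) :
    fderiv ℝ (kksBracket B K g h) α β = β (B (kksGrad g α) (kksGrad h α))
      + kksForm B K α (fderiv ℝ (kksGrad g) α β) (kksGrad h α)
      + kksForm B K α (kksGrad g α) (fderiv ℝ (kksGrad h) α β) := by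
  have hB := (hasFDerivAt_id α).clm_apply
    ((B.toContinuousBilinearMap.hasFDerivAt.comp α hg.hasFDerivAt).clm_apply hh.hasFDerivAt)
  have hK :=
    (K.toContinuousBilinearMap.hasFDerivAt.comp α hg.hasFDerivAt).clm_apply hh.hasFDerivAt
  rw [(show HasFDerivAt (kksBracket B K g h) _ α from hB.add hK).fderiv]
  simp only [id_eq, Function.comp_apply, ContinuousLinearMap.comp_add,
    LinearMap.toContinuousBilinearMap_apply, add_apply,
    ContinuousLinearMap.comp_apply, ContinuousLinearMap.flip_apply, ContinuousLinearMap.id_apply,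
    kksForm_apply]
  ring

end Bracket

section Hamiltonian

variable [FiniteDimensional ℝ L] {B : L →ₗ[ℝ] L →ₗ[ℝ] L} {K : L →ₗ[ℝ] L →ₗ[ℝ] ℝ}
  {f g h : (L →L[ℝ] ℝ) → ℝ} {α : L →L[ℝ] ℝ}

variable (B K) in
noncomputable def kksHamiltonian (f : (L →L[ℝ] ℝ) → ℝ) (α : L →L[ℝ] ℝ) : L →L[ℝ] ℝ :=
  (kksForm B K α (kksGrad f α)).toContinuousLinearMap

theorem kksHamiltonian_apply (x : L) :
    kksHamiltonian B K f α x = kksForm B K α (kksGrad f α) x :=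
  rfl

theorem kksBracket_eq_fderiv_kksHamiltonian :
    kksBracket B K f g α = fderiv ℝ g α (kksHamiltonian B K f α) := by
  rw [fderiv_apply_eq_apply_kksGrad]
  rfl

theorem kksBracket_kksBracket_apply (hB : B.IsAlt) (hK : K.IsAlt) (hg : ContDiff ℝ 2 g)
    (hh : ContDiff ℝ 2 h) :
    kksBracket B K f (kksBracket B K g h) α =
      kksForm B K α (kksGrad f α) (B (kksGrad g α) (kksGrad h α))
        - fderiv ℝ (fderiv ℝ g) α (kksHamiltonian B K f α) (kksHamiltonian B K h α)
        + fderiv ℝ (fderiv ℝ h) α (kksHamiltonian B K f α) (kksHamiltonian B K g α) := by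
  have hdiff {φ : (L →L[ℝ] ℝ) → ℝ} (hφ : ContDiff ℝ 2 φ) : DifferentiableAt ℝ (kksGrad φ) α :=
    (kksGrad_contDiff (m := 1) hφ (by norm_num)).differentiable one_ne_zero α
  rw [kksBracket_eq_fderiv_kksHamiltonian, fderiv_kksBracket_apply (hdiff hg) (hdiff hh),
    ← apply_fderiv_kksGrad, ← apply_fderiv_kksGrad]
  simp only [kksHamiltonian_apply]
  linarith [(kksForm_isAlt α hB hK).neg (kksGrad h α)
    (fderiv ℝ (kksGrad g) α (kksHamiltonian B K f α))]

theorem kksBracket_jacobi (hB : B.IsAlt)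
    (hBjacobi : ∀ x y z : L, B (B x y) z + B (B y z) x + B (B z x) y = 0) (hK : K.IsAlt)
    (hKcocycle : ∀ x y z : L, K (B x y) z + K (B y z) x + K (B z x) y = 0)
    (hf : ContDiff ℝ 2 f) (hg : ContDiff ℝ 2 g) (hh : ContDiff ℝ 2 h) :
    kksBracket B K f (kksBracket B K g h) + kksBracket B K g (kksBracket B K h f)
      + kksBracket B K h (kksBracket B K f g) = 0 := by
  funext α
  have hsymm {φ : (L →L[ℝ] ℝ) → ℝ} (hφ : ContDiff ℝ 2 φ) : IsSymmSndFDerivAt ℝ φ α :=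
    hφ.contDiffAt.isSymmSndFDerivAt (by simp)
  simp only [Pi.add_apply, Pi.zero_apply, kksBracket_kksBracket_apply hB hK hg hh,
    kksBracket_kksBracket_apply hB hK hh hf, kksBracket_kksBracket_apply hB hK hf hg]
  linarith [kksForm_apply_cyclic α hB hBjacobi hK hKcocycle (kksGrad f α) (kksGrad g α)
      (kksGrad h α),
    hsymm hf (kksHamiltonian B K g α) (kksHamiltonian B K h α),
    hsymm hg (kksHamiltonian B K h α) (kksHamiltonian B K f α),
    hsymm hh (kksHamiltonian B K f α) (kksHamiltonian B K g α)]

end Hamiltonian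

end

/-- For a finite-dimensional real Lie algebra `(L, B)` and a Chevalley–Eilenberg
2-cocycle `K`, the KKS bracket is a Poisson bracket on `C^∞(𝔤*, ℝ)`: it preserves
smoothness, is `ℝ`-bilinear, antisymmetric, satisfies the Leibniz rule and the
Jacobi identity. -/
theorem kks_isPoissonBracket {L : Type*} [NormedAddCommGroup L] [NormedSpace ℝ L]
    [FiniteDimensional ℝ L]
    (B : L →ₗ[ℝ] L →ₗ[ℝ] L)
    (hBalt : ∀ x : L, B x x = 0)
    (hBjacobi : ∀ x y z : L, B (B x y) z + B (B y z) x + B (B z x) y = 0)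
    (K : L →ₗ[ℝ] L →ₗ[ℝ] ℝ)
    (hKalt : ∀ x : L, K x x = 0)
    (hKcocycle : ∀ x y z : L, K (B x y) z + K (B y z) x + K (B z x) y = 0) :
    -- the bracket of smooth functions is smooth
    (∀ f g : (L →L[ℝ] ℝ) → ℝ, ContDiff ℝ (⊤ : ℕ∞) f → ContDiff ℝ (⊤ : ℕ∞) g →
        ContDiff ℝ (⊤ : ℕ∞) (kksBracket B K f g)) ∧
    -- ℝ-linearity in the first argument
    (∀ f f' g : (L →L[ℝ] ℝ) → ℝ, ∀ c : ℝ, ContDiff ℝ (⊤ : ℕ∞) f →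
        ContDiff ℝ (⊤ : ℕ∞) f' → ContDiff ℝ (⊤ : ℕ∞) g →
        kksBracket B K (c • f + f') g = c • kksBracket B K f g + kksBracket B K f' g) ∧
    -- ℝ-linearity in the second argument
    (∀ f g g' : (L →L[ℝ] ℝ) → ℝ, ∀ c : ℝ, ContDiff ℝ (⊤ : ℕ∞) f →
        ContDiff ℝ (⊤ : ℕ∞) g → ContDiff ℝ (⊤ : ℕ∞) g' →
        kksBracket B K f (c • g + g') = c • kksBracket B K f g + kksBracket B K f g') ∧
    -- antisymmetry
    (∀ f g : (L →L[ℝ] ℝ) → ℝ, ContDiff ℝ (⊤ : ℕ∞) f → ContDiff ℝ (⊤ : ℕ∞) g →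
        kksBracket B K f g = -kksBracket B K g f) ∧
    -- Leibniz rule
    (∀ f g h : (L →L[ℝ] ℝ) → ℝ, ContDiff ℝ (⊤ : ℕ∞) f → ContDiff ℝ (⊤ : ℕ∞) g →
        ContDiff ℝ (⊤ : ℕ∞) h →
        kksBracket B K f (g * h) = kksBracket B K f g * h + g * kksBracket B K f h) ∧
    -- Jacobi identity
    (∀ f g h : (L →L[ℝ] ℝ) → ℝ, ContDiff ℝ (⊤ : ℕ∞) f → ContDiff ℝ (⊤ : ℕ∞) g →
        ContDiff ℝ (⊤ : ℕ∞) h →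
        kksBracket B K f (kksBracket B K g h) + kksBracket B K g (kksBracket B K h f) +
          kksBracket B K h (kksBracket B K f g) = 0) := by
  have hC2 {φ : (L →L[ℝ] ℝ) → ℝ} (hφ : ContDiff ℝ (⊤ : ℕ∞) φ) : ContDiff ℝ 2 φ :=
    hφ.of_le (WithTop.coe_le_coe.2 le_top)
  have hdiff {φ : (L →L[ℝ] ℝ) → ℝ} (hφ : ContDiff ℝ (⊤ : ℕ∞) φ) : Differentiable ℝ φ :=
    hφ.differentiable (by simp)
  refine ⟨fun f g hf hg => kksBracket_contDiff hf hg (by simp), ?_, ?_,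
    fun f g _ _ => kksBracket_antisymm hBalt hKalt,
    fun f g h _ hg hh => kksBracket_mul_right (hdiff hg) (hdiff hh),
    fun f g h hf hg hh =>
      kksBracket_jacobi hBalt hBjacobi hKalt hKcocycle (hC2 hf) (hC2 hg) (hC2 hh)⟩
  · intro f f' g c hf hf' _
    rw [kksBracket_add_left ((hdiff hf).const_smul c) (hdiff hf'), kksBracket_smul_left]
  · intro f g g' c _ hg hg'
    rw [kksBracket_add_right ((hdiff hg).const_smul c) (hdiff hg'), kksBracket_smul_right]
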